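/- Let n and i be integers with 1 ≤ i ≤ n−1. Then the number of permutations π of length n which avoid both 1243 and 2143 and satisfy π(i+1) = n equals |S_i(1243, 2143)| · |S_{n−i}(1243, 2143)|. -/

import Mathlib

/-!
Let `π` avoid `1243` and `2143` and have its maximum at position `i + 1`. Two entries left of
the maximum can never both lie below an entry right of it, since together with the maximum and
that entry they would form a `1243` or a `2143`. Hence every left entry except the smallest one
lies above the whole right block, so `π` is determined by the pattern `σ` of its first `i`
entries and the pattern `ρ` of its `n - i` smallest entries (the left minimum and the right
block). Conversely, gluing any `σ` and `ρ` in this way gives a permutation whose occurrences of a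
pattern `ab43` with `a, b < 3` lie either in the left block or among the low entries, so it avoids
both patterns exactly when `σ` and `ρ` do.
-/

/-- `π` contains the pattern `σ`. -/
def PContains {k n : ℕ} (σ : Equiv.Perm (Fin k)) (π : Equiv.Perm (Fin n)) : Prop :=
  ∃ f : Fin k → Fin n, StrictMono f ∧ ∀ a b : Fin k, π (f a) < π (f b) ↔ σ a < σ b

/-- `π` avoids the pattern `σ`. -/
def PAvoids {k n : ℕ} (σ : Equiv.Perm (Fin k)) (π : Equiv.Perm (Fin n)) : Prop :=
  ¬ PContains σ π

/-- The pattern 1243 (in one-line notation, 1-based). -/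
def p1243 : Equiv.Perm (Fin 4) := ⟨![0, 1, 3, 2], ![0, 1, 3, 2], by decide, by decide⟩

/-- The pattern 2143 (in one-line notation, 1-based). -/
def p2143 : Equiv.Perm (Fin 4) := ⟨![1, 0, 3, 2], ![1, 0, 3, 2], by decide, by decide⟩

/-- `π` avoids both 1243 and 2143. -/
def AvoidsBoth {n : ℕ} (π : Equiv.Perm (Fin n)) : Prop :=
  PAvoids p1243 π ∧ PAvoids p2143 π

/-- `τ_k(π)`: the number of increasing subsequences of length `k` in `π`
(with the convention `τ_0 = 0`). -/
noncomputable def tauPerm (k : ℕ) {n : ℕ} (π : Equiv.Perm (Fin n)) : ℕ :=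
  if k = 0 then 0 else
    Nat.card {f : Fin k → Fin n // StrictMono f ∧ StrictMono (fun a => π (f a))}

/-- The number of occurrences (subsequences of type `σ`) of the pattern `σ` in `π`. -/
noncomputable def numOcc {k n : ℕ} (σ : Equiv.Perm (Fin k)) (π : Equiv.Perm (Fin n)) : ℕ :=
  Nat.card {f : Fin k → Fin n // StrictMono f ∧ ∀ a b : Fin k, π (f a) < π (f b) ↔ σ a < σ b}

open Equiv Function

theorem Equiv.Perm.eq_of_lt_iff_lt {n : ℕ} {π π' : Perm (Fin n)}
    (h : ∀ p q, π p < π q ↔ π' p < π' q) : π = π' := by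
  have hmono : Monotone (π' * π⁻¹) := StrictMono.monotone fun x y hxy => by
    simpa [← h] using hxy
  exact (mul_inv_eq_one.1 ((Perm.monotone_iff _).1 hmono)).symm

theorem Equiv.Perm.val_eq_sub_one_iff {n : ℕ} (π : Perm (Fin n)) (c : Fin n) :
    (π c : ℕ) = n - 1 ↔ ∀ p ≠ c, π p < π c := by
  constructor
  · intro hc p hp
    have hne : (π p : ℕ) ≠ π c := fun h => hp (π.injective (Fin.ext h))
    have := (π p).isLt
    rw [Fin.lt_def]
    omega
  · intro hmax
    have hn : n - 1 < n := by have := c.isLt; omega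
    by_contra hc
    have hlt := hmax (π.symm ⟨n - 1, hn⟩) fun h => hc (by simp [← h])
    have := (π c).isLt
    simp only [apply_symm_apply, Fin.lt_def] at hlt
    omega

/-- The standardization of `f`: `rankPerm f p` is the rank of `f p` among the values of `f`. -/
def rankPerm {α : Type*} [LinearOrder α] {n : ℕ} (f : Fin n → α) : Perm (Fin n) :=
  (Tuple.sort f)⁻¹

theorem rankPerm_lt_rankPerm_iff {α : Type*} [LinearOrder α] {n : ℕ} {f : Fin n → α}
    (hf : Injective f) {p q : Fin n} : rankPerm f p < rankPerm f q ↔ f p < f q := by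
  have hsort : StrictMono (f ∘ Tuple.sort f) :=
    (Tuple.monotone_sort f).strictMono_of_injective (hf.comp (Tuple.sort f).injective)
  simpa [rankPerm] using
    (hsort.lt_iff_lt (a := (Tuple.sort f)⁻¹ p) (b := (Tuple.sort f)⁻¹ q)).symm

section Containment

variable {k l n : ℕ} {τ : Perm (Fin k)} {σ : Perm (Fin l)} {π : Perm (Fin n)}

theorem PContains.trans (h₁ : PContains τ σ) (h₂ : PContains σ π) : PContains τ π := by
  obtain ⟨f, hf, hfτ⟩ := h₁
  obtain ⟨g, hg, hgσ⟩ := h₂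
  exact ⟨g ∘ f, hg.comp hf, fun a b => (hgσ _ _).trans (hfτ a b)⟩

theorem pContains_of_strictMono {f : Fin k → Fin n} (hf : StrictMono f)
    (hv : StrictMono (π ∘ f ∘ τ.symm)) : PContains τ π :=
  ⟨f, hf, fun a b => by simpa using hv.lt_iff_lt (a := τ a) (b := τ b)⟩

theorem PContains.of_range_subset {g : Fin l → Fin n} (hg : StrictMono g)
    (hgσ : ∀ a b, π (g a) < π (g b) ↔ σ a < σ b) {f : Fin k → Fin n} (hf : StrictMono f)
    (hfτ : ∀ a b, π (f a) < π (f b) ↔ τ a < τ b) (hfg : ∀ a, f a ∈ Set.range g) :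
    PContains τ σ := by
  choose e he using hfg
  refine ⟨e, fun a b hab => hg.lt_iff_lt.1 (by simpa only [he] using hf hab), fun a b => ?_⟩
  rw [← hgσ, he, he, hfτ]

theorem AvoidsBoth.of_pContains (hπ : AvoidsBoth π) (h : PContains σ π) : AvoidsBoth σ :=
  ⟨fun h' => hπ.1 (h'.trans h), fun h' => hπ.2 (h'.trans h)⟩

/-- With `c` and `d`, the entries at `q₁` and `q₂` would form a `1243` or a `2143`. -/
theorem AvoidsBoth.false_of_two_left_below_right (hπ : AvoidsBoth π) {q₁ q₂ c d : Fin n}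
    (h₁₂ : q₁ < q₂) (h₂c : q₂ < c) (hcd : c < d) (hdc : π d < π c)
    (h₁ : π q₁ < π d) (h₂ : π q₂ < π d) : False := by
  rcases lt_or_gt_of_ne (π.injective.ne h₁₂.ne) with h | h
  · refine hπ.1 (pContains_of_strictMono (f := ![q₁, q₂, c, d]) ?_ ?_)
    · simp [Fin.strictMono_iff_lt_succ, Fin.forall_fin_succ, *]
    · simp [Fin.strictMono_iff_lt_succ, Fin.forall_fin_succ, p1243, *]
  · refine hπ.2 (pContains_of_strictMono (f := ![q₁, q₂, c, d]) ?_ ?_)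
    · simp [Fin.strictMono_iff_lt_succ, Fin.forall_fin_succ, *]
    · simp [Fin.strictMono_iff_lt_succ, Fin.forall_fin_succ, p2143, *]

end Containment

section Glue

variable {i m : ℕ} [NeZero m]

def apex (i m : ℕ) [NeZero m] : Fin (i + m) := Fin.natAdd i 0

theorem castAdd_lt_apex (a : Fin i) : Fin.castAdd m a < apex i m := by
  simp [apex, Fin.lt_def]

theorem mem_range_castAdd_of_lt_apex {p : Fin (i + m)} (hp : p < apex i m) :
    p ∈ Set.range (Fin.castAdd m) :=
  ⟨⟨p, by simpa [apex, Fin.lt_def] using hp⟩, rfl⟩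

variable [NeZero i]

/-- Where a glued permutation keeps its `m` smallest entries: at the minimum of `σ` and right of
the apex. -/
def lowPos (σ : Perm (Fin i)) (j : Fin m) : Fin (i + m) :=
  if j = 0 then Fin.castAdd m (σ.symm 0) else Fin.natAdd i j

variable (σ : Perm (Fin i)) (ρ : Perm (Fin m))

theorem apex_lt_lowPos {j : Fin m} (hj : j ≠ 0) : apex i m < lowPos σ j := by
  simpa [apex, lowPos, hj] using (Fin.natAdd_lt_natAdd_iff i).2 (Fin.pos_iff_ne_zero.2 hj)

theorem lowPos_strictMono : StrictMono (lowPos σ (m := m)) := by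
  intro j k hjk
  have hk : k ≠ 0 := (Fin.zero_le j).trans_lt hjk |>.ne'
  by_cases hj : j = 0
  · simpa [lowPos, hj] using (castAdd_lt_apex (σ.symm 0)).trans (apex_lt_lowPos σ hk)
  · simpa [lowPos, hj, hk] using (Fin.natAdd_lt_natAdd_iff i).2 hjk

theorem lowPos_ne_apex (j : Fin m) : lowPos σ j ≠ apex i m := by
  by_cases hj : j = 0
  · simpa [lowPos, hj] using (castAdd_lt_apex (σ.symm 0)).ne
  · exact (apex_lt_lowPos σ hj).ne'

theorem mem_range_lowPos_of_apex_lt {p : Fin (i + m)} (hp : apex i m < p) :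
    p ∈ Set.range (lowPos σ) := by
  have hpi : i < p := by simpa [apex, Fin.lt_def] using hp
  have hj : (⟨p - i, by omega⟩ : Fin m) ≠ 0 := by simp [Fin.ext_iff]; omega
  exact ⟨⟨p - i, by omega⟩, by simp [lowPos, hj, Fin.ext_iff]; omega⟩

theorem position_cases (p : Fin (i + m)) :
    p = apex i m ∨ (∃ a, σ a ≠ 0 ∧ p = Fin.castAdd m a) ∨ ∃ j, p = lowPos σ j := by
  rcases lt_trichotomy p (apex i m) with hp | hp | hp
  · obtain ⟨a, rfl⟩ := mem_range_castAdd_of_lt_apex hp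
    by_cases ha : σ a = 0
    · exact .inr <| .inr ⟨0, by simp [lowPos, ← ha]⟩
    · exact .inr <| .inl ⟨a, ha, rfl⟩
  · exact .inl hp
  · obtain ⟨j, rfl⟩ := mem_range_lowPos_of_apex_lt σ hp
    exact .inr <| .inr ⟨j, rfl⟩

/-- `π` is glued from `σ` and `ρ`: its maximum sits at position `i`, its first `i` entries
form the pattern `σ`, and its `m` smallest entries, at `lowPos σ`, form the pattern `ρ`. -/
structure IsGlue (π : Perm (Fin (i + m))) : Prop where
  lt_apex : ∀ p ≠ apex i m, π p < π (apex i m)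
  castAdd_lt_iff : ∀ a b, π (Fin.castAdd m a) < π (Fin.castAdd m b) ↔ σ a < σ b
  lowPos_lt_iff : ∀ j k, π (lowPos σ j) < π (lowPos σ k) ↔ ρ j < ρ k
  lowPos_lt_castAdd : ∀ j a, σ a ≠ 0 → π (lowPos σ j) < π (Fin.castAdd m a)

variable {σ ρ}

theorem IsGlue.lt_iff_lt {π π' : Perm (Fin (i + m))} (h : IsGlue σ ρ π) (h' : IsGlue σ ρ π')
    (p q : Fin (i + m)) : π p < π q ↔ π' p < π' q := by
  rcases position_cases σ p with rfl | ⟨a, ha, rfl⟩ | ⟨j, rfl⟩ <;>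
    rcases position_cases σ q with rfl | ⟨b, hb, rfl⟩ | ⟨k, rfl⟩
  · simp
  · exact iff_of_false (h.lt_apex _ (castAdd_lt_apex b).ne).not_gt
      (h'.lt_apex _ (castAdd_lt_apex b).ne).not_gt
  · exact iff_of_false (h.lt_apex _ (lowPos_ne_apex σ k)).not_gt
      (h'.lt_apex _ (lowPos_ne_apex σ k)).not_gt
  · exact iff_of_true (h.lt_apex _ (castAdd_lt_apex a).ne) (h'.lt_apex _ (castAdd_lt_apex a).ne)
  · exact (h.castAdd_lt_iff a b).trans (h'.castAdd_lt_iff a b).symm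
  · exact iff_of_false (h.lowPos_lt_castAdd k a ha).not_gt (h'.lowPos_lt_castAdd k a ha).not_gt
  · exact iff_of_true (h.lt_apex _ (lowPos_ne_apex σ j)) (h'.lt_apex _ (lowPos_ne_apex σ j))
  · exact iff_of_true (h.lowPos_lt_castAdd j b hb) (h'.lowPos_lt_castAdd j b hb)
  · exact (h.lowPos_lt_iff j k).trans (h'.lowPos_lt_iff j k).symm

theorem IsGlue.unique {π π' : Perm (Fin (i + m))} (h : IsGlue σ ρ π) (h' : IsGlue σ ρ π') :
    π = π' :=
  Perm.eq_of_lt_iff_lt (h.lt_iff_lt h')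

theorem IsGlue.factors_eq {σ' : Perm (Fin i)} {ρ' : Perm (Fin m)} {π : Perm (Fin (i + m))}
    (h : IsGlue σ ρ π) (h' : IsGlue σ' ρ' π) : σ = σ' ∧ ρ = ρ' := by
  have hσ : σ = σ' :=
    Perm.eq_of_lt_iff_lt fun a b => (h.castAdd_lt_iff a b).symm.trans (h'.castAdd_lt_iff a b)
  subst hσ
  exact ⟨rfl, Perm.eq_of_lt_iff_lt fun j k =>
    (h.lowPos_lt_iff j k).symm.trans (h'.lowPos_lt_iff j k)⟩

theorem IsGlue.pContains_or_pContains {π : Perm (Fin (i + m))} (h : IsGlue σ ρ π)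
    {τ : Perm (Fin 4)} (hτ₀ : τ 0 < τ 3) (hτ₁ : τ 1 < τ 3) (hτ₂ : τ 3 < τ 2)
    (hπ : PContains τ π) : PContains τ σ ∨ PContains τ ρ := by
  obtain ⟨f, hf, hfτ⟩ := hπ
  have v₀ := (hfτ 0 3).2 hτ₀
  have v₁ := (hfτ 1 3).2 hτ₁
  have v₂ := (hfτ 3 2).2 hτ₂
  have h₃ : f 3 ≠ apex i m := by
    intro he
    exact (h.lt_apex (f 2) (he ▸ hf.injective.ne (by decide))).not_gt (he ▸ v₂)
  rcases h₃.lt_or_gt with h₃ | h₃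
  · refine .inl (PContains.of_range_subset (Fin.strictMono_castAdd m) h.castAdd_lt_iff hf hfτ
      fun a => mem_range_castAdd_of_lt_apex ((hf.monotone ?_).trans_lt h₃))
    fin_cases a <;> decide
  refine .inr (PContains.of_range_subset (lowPos_strictMono σ) h.lowPos_lt_iff hf hfτ ?_)
  obtain ⟨j₃, hj₃⟩ := mem_range_lowPos_of_apex_lt σ h₃
  -- the left block holds only one value below the right block, at the minimum of `σ`
  have low : ∀ p, π p < π (f 3) → p ∈ Set.range (lowPos σ) := by
    intro p hp
    rcases position_cases σ p with rfl | ⟨a, ha, rfl⟩ | ⟨j, rfl⟩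
    · exact absurd hp (h.lt_apex _ h₃.ne').not_gt
    · rw [← hj₃] at hp
      exact absurd hp (h.lowPos_lt_castAdd j₃ a ha).not_gt
    · exact ⟨j, rfl⟩
  obtain ⟨j₀, hj₀⟩ := low _ v₀
  obtain ⟨j₁, hj₁⟩ := low _ v₁
  have hj : j₀ < j₁ :=
    (lowPos_strictMono σ).lt_iff_lt.1 (by rw [hj₀, hj₁]; exact hf (by decide))
  have h₁ : apex i m < f 1 := hj₁ ▸ apex_lt_lowPos σ ((Fin.zero_le j₀).trans_lt hj).ne'
  intro a
  fin_cases a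
  · exact ⟨j₀, hj₀⟩
  · exact ⟨j₁, hj₁⟩
  · exact mem_range_lowPos_of_apex_lt σ (h₁.trans (hf (by decide)))
  · exact ⟨j₃, hj₃⟩

theorem IsGlue.avoidsBoth_iff {π : Perm (Fin (i + m))} (h : IsGlue σ ρ π) :
    AvoidsBoth π ↔ AvoidsBoth σ ∧ AvoidsBoth ρ := by
  refine ⟨fun hπ => ⟨hπ.of_pContains ⟨_, Fin.strictMono_castAdd m, h.castAdd_lt_iff⟩,
    hπ.of_pContains ⟨_, lowPos_strictMono σ, h.lowPos_lt_iff⟩⟩, ?_⟩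
  rintro ⟨hσ, hρ⟩
  exact ⟨fun hc => (h.pContains_or_pContains (by decide) (by decide) (by decide) hc).elim
      hσ.1 hρ.1,
    fun hc => (h.pContains_or_pContains (by decide) (by decide) (by decide) hc).elim hσ.2 hρ.2⟩

theorem isGlue_of_avoidsBoth {π : Perm (Fin (i + m))} (hπ : AvoidsBoth π)
    (hmax : ∀ p ≠ apex i m, π p < π (apex i m)) :
    IsGlue (rankPerm (π ∘ Fin.castAdd m))
      (rankPerm (π ∘ lowPos (rankPerm (π ∘ Fin.castAdd m)))) π := by
  set σ := rankPerm (π ∘ Fin.castAdd m)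
  have hσ : ∀ a b, π (Fin.castAdd m a) < π (Fin.castAdd m b) ↔ σ a < σ b := fun _ _ =>
    (rankPerm_lt_rankPerm_iff (π.injective.comp (Fin.castAdd_injective i m))).symm
  refine ⟨hmax, hσ, fun _ _ =>
    (rankPerm_lt_rankPerm_iff (π.injective.comp (lowPos_strictMono σ).injective)).symm,
    fun j a ha => ?_⟩
  have hmin : π (Fin.castAdd m (σ.symm 0)) < π (Fin.castAdd m a) := by
    simpa [hσ, Fin.pos_iff_ne_zero] using ha
  by_cases hj : j = 0
  · simpa [lowPos, hj] using hmin
  by_contra hle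
  have hd := apex_lt_lowPos σ hj
  have hlt : π (Fin.castAdd m a) < π (lowPos σ j) :=
    (not_lt.1 hle).lt_of_ne (π.injective.ne ((castAdd_lt_apex a).trans hd).ne)
  have hdc := hmax _ (lowPos_ne_apex σ j)
  rcases (show σ.symm 0 ≠ a by rintro rfl; simp at ha).lt_or_gt with ha₀ | ha₀
  · exact hπ.false_of_two_left_below_right (Fin.strictMono_castAdd m ha₀) (castAdd_lt_apex a)
      hd hdc (hmin.trans hlt) hlt
  · exact hπ.false_of_two_left_below_right (Fin.strictMono_castAdd m ha₀) (castAdd_lt_apex _)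
      hd hdc hlt (hmin.trans hlt)

end Glue

section Construction

variable {i m : ℕ} [NeZero i] [NeZero m] (σ : Perm (Fin i)) (ρ : Perm (Fin m))

def glueKey : Fin (i + m) → ℕ :=
  Fin.addCases (fun a => if σ a = 0 then ρ 0 else m + σ a)
    (fun j => if j = 0 then i + m else ρ j)

theorem glueKey_castAdd (a : Fin i) :
    glueKey σ ρ (Fin.castAdd m a) = if σ a = 0 then (ρ 0 : ℕ) else m + σ a := by
  simp [glueKey]

theorem glueKey_castAdd_of_ne {a : Fin i} (ha : σ a ≠ 0) :
    glueKey σ ρ (Fin.castAdd m a) = m + σ a := by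
  simp [glueKey, ha]

theorem glueKey_apex : glueKey σ ρ (apex i m) = i + m := by
  simp [glueKey, apex]

theorem glueKey_lowPos (j : Fin m) : glueKey σ ρ (lowPos σ j) = ρ j := by
  by_cases hj : j = 0 <;> simp [glueKey, lowPos, hj]

theorem glueKey_injective : Injective (glueKey σ ρ) := by
  intro p q hpq
  rcases position_cases σ p with rfl | ⟨a, ha, rfl⟩ | ⟨j, rfl⟩ <;>
    rcases position_cases σ q with rfl | ⟨b, hb, rfl⟩ | ⟨k, rfl⟩ <;>
    simp (disch := assumption) only [glueKey_apex, glueKey_castAdd_of_ne, glueKey_lowPos] at hpq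
  · rfl
  · omega
  · omega
  · omega
  · exact congrArg _ (σ.injective (Fin.ext (by omega)))
  · omega
  · omega
  · omega
  · exact congrArg _ (ρ.injective (Fin.ext hpq))

def glue : Perm (Fin (i + m)) := rankPerm (glueKey σ ρ)

theorem isGlue_glue : IsGlue σ ρ (glue σ ρ) := by
  have hkey (p q) : glue σ ρ p < glue σ ρ q ↔ glueKey σ ρ p < glueKey σ ρ q :=
    rankPerm_lt_rankPerm_iff (glueKey_injective σ ρ)
  have hρ₀ := (ρ 0).isLt
  refine ⟨fun p hp => ?_, fun a b => ?_, fun j k => ?_, fun j a ha => ?_⟩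
  · rw [hkey, glueKey_apex]
    rcases position_cases σ p with rfl | ⟨a, ha, rfl⟩ | ⟨j, rfl⟩
    · exact absurd rfl hp
    · rw [glueKey_castAdd_of_ne σ ρ ha]
      omega
    · rw [glueKey_lowPos]
      omega
  · rw [hkey, glueKey_castAdd, glueKey_castAdd, Fin.lt_def]
    split_ifs with ha hb hb <;> simp only [Fin.ext_iff, Fin.val_zero] at ha hb <;> omega
  · rw [hkey, glueKey_lowPos, glueKey_lowPos, Fin.lt_def]
  · rw [hkey, glueKey_lowPos, glueKey_castAdd_of_ne σ ρ ha]
    omega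

end Construction

theorem card_avoidsBoth_apex (i m : ℕ) [NeZero i] [NeZero m] :
    Nat.card {π : Perm (Fin (i + m)) //
        AvoidsBoth π ∧ ∀ p ≠ apex i m, π p < π (apex i m)} =
      Nat.card {σ : Perm (Fin i) // AvoidsBoth σ} *
      Nat.card {ρ : Perm (Fin m) // AvoidsBoth ρ} := by
  rw [← Nat.card_prod]
  refine (Nat.card_congr (Equiv.ofBijective
    (fun x => ⟨glue x.1.1 x.2.1, (isGlue_glue _ _).avoidsBoth_iff.2 ⟨x.1.2, x.2.2⟩,
      (isGlue_glue _ _).lt_apex⟩) ⟨fun x y hxy => ?_, fun π => ?_⟩)).symm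
  · have hglue : glue x.1.1 x.2.1 = glue y.1.1 y.2.1 := congrArg Subtype.val hxy
    have hy := isGlue_glue y.1.1 y.2.1
    rw [← hglue] at hy
    obtain ⟨h₁, h₂⟩ := (isGlue_glue x.1.1 x.2.1).factors_eq hy
    exact Prod.ext (Subtype.ext h₁) (Subtype.ext h₂)
  · have h := isGlue_of_avoidsBoth π.2.1 π.2.2
    obtain ⟨hσ, hρ⟩ := h.avoidsBoth_iff.1 π.2.1
    exact ⟨⟨⟨_, hσ⟩, ⟨_, hρ⟩⟩, Subtype.ext ((isGlue_glue _ _).unique h)⟩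

/-- For 1 ≤ i ≤ n−1, the number of permutations π of length n avoiding
1243 and 2143 with π(i+1) = n (one-line, 1-based) equals
|S_i(1243,2143)| · |S_{n−i}(1243,2143)|. -/
theorem stmt_2 (n i : ℕ) (h1 : 1 ≤ i) (h2 : i ≤ n - 1) :
    Nat.card {π : Equiv.Perm (Fin n) // AvoidsBoth π ∧ (π ⟨i, by omega⟩ : ℕ) = n - 1} =
      Nat.card {π : Equiv.Perm (Fin i) // AvoidsBoth π} *
      Nat.card {π : Equiv.Perm (Fin (n - i)) // AvoidsBoth π} := by
  obtain ⟨m, rfl⟩ : ∃ m, n = i + m := ⟨n - i, by omega⟩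
  have : NeZero i := ⟨by omega⟩
  have : NeZero m := ⟨by omega⟩
  rw [Nat.add_sub_cancel_left, ← card_avoidsBoth_apex]
  exact Nat.card_congr (Equiv.subtypeEquivRight fun π =>
    and_congr_right fun _ => Perm.val_eq_sub_one_iff π (apex i m))
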